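/- Let $X \in \mathbb{R}^{p \times n}$ have full row rank, $H = XX^\top$, $Z \in \mathbb{R}^{m \times n}$, $M = ZX^\top$. For any rank constraint $r$, the minimizers of $\|UX - Z\|_F^2$ over matrices $U \in \mathbb{R}^{m \times p}$ with $\mathrm{rank}(U) \leq r$ are exactly $U = VH^{-1/2}$, where $V$ ranges over minimizers of $\|V - MH^{-1/2}\|_F^2$ over $\mathrm{rank}(V) \leq r$; moreover the substitution $V = UH^{1/2}$ preserves rank: $\mathrm{rank}(UH^{1/2}) = \mathrm{rank}(U)$. -/

import Mathlib

/-!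
Since `S * S = X * Xᵀ` with `S` symmetric and `M = Z * Xᵀ`, expanding the square gives
`‖U X - Z‖² = ‖U S - M S⁻¹‖² + const`, so the two objectives differ by a constant under the
substitution `V = U S`. Right multiplication by the invertible `S` preserves rank, hence maps the
rank constraint set onto itself, and minimizers correspond.
-/

open Matrix BigOperators

noncomputable section

/-- Squared Frobenius norm of a real matrix. -/
def frobSq {m n : ℕ} (M : Matrix (Fin m) (Fin n) ℝ) : ℝ := ∑ i, ∑ j, (M i j)^2

lemma frobSq_eq_trace {m n : ℕ} (A : Matrix (Fin m) (Fin n) ℝ) :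
    frobSq A = (A * Aᵀ).trace := by
  simp [frobSq, Matrix.trace, Matrix.mul_apply, sq]

lemma frobSq_sub {m n : ℕ} (A B : Matrix (Fin m) (Fin n) ℝ) :
    frobSq (A - B) = frobSq A - 2 * (A * Bᵀ).trace + frobSq B := by
  have hcross : (B * Aᵀ).trace = (A * Bᵀ).trace := by
    rw [← trace_transpose, transpose_mul, transpose_transpose]
  simp only [frobSq_eq_trace, transpose_sub, Matrix.sub_mul, Matrix.mul_sub, trace_sub, hcross]
  ring

lemma frobSq_mul_sub_eq_whitened {m n p : ℕ} (X : Matrix (Fin p) (Fin n) ℝ)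
    (S : Matrix (Fin p) (Fin p) ℝ) (hS : Sᵀ = S) (hSX : S * S = X * Xᵀ) (hdet : IsUnit S.det)
    (Z : Matrix (Fin m) (Fin n) ℝ) (U : Matrix (Fin m) (Fin p) ℝ) :
    frobSq (U * X - Z) =
      frobSq (U * S - Z * Xᵀ * S⁻¹) + (frobSq Z - frobSq (Z * Xᵀ * S⁻¹)) := by
  have hquad : frobSq (U * X) = frobSq (U * S) := by
    rw [frobSq_eq_trace, frobSq_eq_trace, transpose_mul, transpose_mul, hS, Matrix.mul_assoc,
      ← Matrix.mul_assoc X, ← hSX]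
    simp only [Matrix.mul_assoc]
  have hcross : U * X * Zᵀ = U * S * (Z * Xᵀ * S⁻¹)ᵀ := by
    rw [transpose_mul, transpose_nonsing_inv, hS, transpose_mul, transpose_transpose,
      Matrix.mul_assoc U S, mul_nonsing_inv_cancel_left S _ hdet, Matrix.mul_assoc]
  rw [frobSq_sub, frobSq_sub, hquad, hcross]
  ring

lemma isMinOn_iff_of_eq_comp_add_const {α β : Type*} {f : α → ℝ} {g : β → ℝ} {c : ℝ}
    {φ : α → β} {ψ : β → α} (hφψ : ∀ y, φ (ψ y) = y) (hfg : ∀ x, f x = g (φ x) + c)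
    {s : Set α} {t : Set β} (hφ : Set.MapsTo φ s t) (hψ : Set.MapsTo ψ t s) (a : α) :
    IsMinOn f s a ↔ IsMinOn g t (φ a) := by
  simp only [isMinOn_iff, hfg, add_le_add_iff_right]
  constructor
  · intro h y hy
    simpa only [hφψ] using h (ψ y) (hψ hy)
  · exact fun h x hx => h (φ x) (hφ hx)

lemma rank_le_mapsTo_mul_right {R m n : Type*} [CommRing R] [Fintype n] [DecidableEq n]
    {S : Matrix n n R} (hdet : IsUnit S.det) (r : ℕ) :
    Set.MapsTo (· * S) {U : Matrix m n R | U.rank ≤ r} {U | U.rank ≤ r} :=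
  fun U hU => by simpa only [Set.mem_ofPred_eq, rank_mul_eq_left_of_isUnit_det _ _ hdet] using hU

theorem whitened_rank_constrained_equivalence_general
    {p n m : ℕ}
    (X : Matrix (Fin p) (Fin n) ℝ)
    (H : Matrix (Fin p) (Fin p) ℝ) (hH : H = X * Xᵀ)
    (Hsqrt : Matrix (Fin p) (Fin p) ℝ)
    (hsym : Hsqrtᵀ = Hsqrt) (hpd : Hsqrt.PosDef)
    (hsq : Hsqrt * Hsqrt = H)
    (Z : Matrix (Fin m) (Fin n) ℝ)
    (M : Matrix (Fin m) (Fin p) ℝ) (hM : M = Z * Xᵀ)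
    (r : ℕ) :
    (∀ U : Matrix (Fin m) (Fin p) ℝ, (U * Hsqrt).rank = U.rank) ∧
    (∀ U : Matrix (Fin m) (Fin p) ℝ, U.rank ≤ r →
      ((∀ U' : Matrix (Fin m) (Fin p) ℝ, U'.rank ≤ r →
          frobSq (U * X - Z) ≤ frobSq (U' * X - Z))
        ↔
       (∀ V' : Matrix (Fin m) (Fin p) ℝ, V'.rank ≤ r →
          frobSq (U * Hsqrt - M * Hsqrt⁻¹) ≤ frobSq (V' - M * Hsqrt⁻¹)))) ∧
    (∀ V : Matrix (Fin m) (Fin p) ℝ, V.rank ≤ r →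
      (∀ V' : Matrix (Fin m) (Fin p) ℝ, V'.rank ≤ r →
          frobSq (V - M * Hsqrt⁻¹) ≤ frobSq (V' - M * Hsqrt⁻¹)) →
      (∀ U' : Matrix (Fin m) (Fin p) ℝ, U'.rank ≤ r →
          frobSq (V * Hsqrt⁻¹ * X - Z) ≤ frobSq (U' * X - Z))) := by
  have hdet : IsUnit Hsqrt.det := hpd.det_pos.ne'.isUnit
  have hdet_inv : IsUnit Hsqrt⁻¹.det := isUnit_nonsing_inv_det_iff.mpr hdet
  subst hH hM
  have hmin_iff (U : Matrix (Fin m) (Fin p) ℝ) :=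
    isMinOn_iff_of_eq_comp_add_const (g := (frobSq <| · - Z * Xᵀ * Hsqrt⁻¹)) (φ := (· * Hsqrt))
      (fun V => nonsing_inv_mul_cancel_right Hsqrt V hdet)
      (frobSq_mul_sub_eq_whitened X Hsqrt hsym hsq hdet Z)
      (rank_le_mapsTo_mul_right hdet r) (rank_le_mapsTo_mul_right hdet_inv r) U
  refine ⟨fun U => rank_mul_eq_left_of_isUnit_det _ _ hdet, fun U _ => ?_, fun V _ hV => ?_⟩
  · exact isMinOn_iff.symm.trans ((hmin_iff U).trans isMinOn_iff)
  · refine isMinOn_iff.mp ((hmin_iff (V * Hsqrt⁻¹)).mpr ?_)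
    rwa [nonsing_inv_mul_cancel_right Hsqrt V hdet, isMinOn_iff]

theorem whitened_rank_constrained_equivalence
    {p n m : ℕ}
    (X : Matrix (Fin p) (Fin n) ℝ)
    (H : Matrix (Fin p) (Fin p) ℝ) (hH : H = X * Xᵀ)
    (hHpd : H.PosDef)
    (Hsqrt : Matrix (Fin p) (Fin p) ℝ)
    (hsym : Hsqrtᵀ = Hsqrt) (hpd : Hsqrt.PosDef)
    (hsq : Hsqrt * Hsqrt = H)
    (Z : Matrix (Fin m) (Fin n) ℝ)
    (M : Matrix (Fin m) (Fin p) ℝ) (hM : M = Z * Xᵀ)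
    (r : ℕ) :
    (∀ U : Matrix (Fin m) (Fin p) ℝ, (U * Hsqrt).rank = U.rank) ∧
    (∀ U : Matrix (Fin m) (Fin p) ℝ, U.rank ≤ r →
      ((∀ U' : Matrix (Fin m) (Fin p) ℝ, U'.rank ≤ r →
          frobSq (U * X - Z) ≤ frobSq (U' * X - Z))
        ↔
       (∀ V' : Matrix (Fin m) (Fin p) ℝ, V'.rank ≤ r →
          frobSq (U * Hsqrt - M * Hsqrt⁻¹) ≤ frobSq (V' - M * Hsqrt⁻¹)))) ∧
    (∀ V : Matrix (Fin m) (Fin p) ℝ, V.rank ≤ r →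
      (∀ V' : Matrix (Fin m) (Fin p) ℝ, V'.rank ≤ r →
          frobSq (V - M * Hsqrt⁻¹) ≤ frobSq (V' - M * Hsqrt⁻¹)) →
      (∀ U' : Matrix (Fin m) (Fin p) ℝ, U'.rank ≤ r →
          frobSq (V * Hsqrt⁻¹ * X - Z) ≤ frobSq (U' * X - Z))) :=
  whitened_rank_constrained_equivalence_general X H hH Hsqrt hsym hpd hsq Z M hM r
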